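/- arXiv:1111.4705 — 5 statements merged into one kernel-verified Lean document; each statement's English description precedes it below -/
import Mathlib

section
/- The dual space decomposes as an internal direct sum V* = im ω♭ ⊕ ℝ·α, where im ω♭ = {ω(v, ·) : v ∈ V} (the pointwise version of Lemma 2.1(1): T*M = im(dα)♭ ⊕ ⟨α⟩). -/
/-!
Nondegeneracy on `ker α` forces `ker ω♭ ∩ ker α = 0`, so `ker ω♭` has dimension at most one and
`im ω♭` has codimension at most one in `V*`. It remains to see that `im ω♭ ∩ ℝ·α = 0`: if
`ω(v, ·) = c α` with `c ≠ 0`, evaluating at `v` gives `α v = 0`, and then `ω(v, ·)` vanishes on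
`ker α`, so `v = 0`.
-/

open Module LinearMap

section

variable {K V : Type*} [Field K] [AddCommGroup V] [Module K V]

theorem finrank_le_one_of_disjoint_ker {f : Dual K V} {p : Submodule K V}
    (h : Disjoint p (ker f)) : finrank K p ≤ 1 := by
  have hinj : Function.Injective (f.domRestrict p) := by
    rw [← ker_eq_bot, ker_eq_bot']
    exact fun x hx ↦ Subtype.ext (disjoint_ker.mp h x x.2 hx)
  simpa using finrank_le_finrank_of_injective hinj

variable (α : Dual K V) (ω : V →ₗ[K] V →ₗ[K] K)

theorem disjoint_ker_of_nondegenerate_on_ker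
    (hnd : ∀ v ∈ ker α, (∀ w ∈ ker α, ω v w = 0) → v = 0) : Disjoint (ker ω) (ker α) :=
  disjoint_ker.mpr fun v hωv hαv ↦ hnd v hαv fun w _ ↦ by simp [mem_ker.mp hωv]

theorem finrank_le_finrank_range_add_one_of_nondegenerate_on_ker [FiniteDimensional K V]
    (hnd : ∀ v ∈ ker α, (∀ w ∈ ker α, ω v w = 0) → v = 0) :
    finrank K V ≤ finrank K (range ω) + 1 := by
  have := finrank_le_one_of_disjoint_ker (disjoint_ker_of_nondegenerate_on_ker α ω hnd)
  have := finrank_range_add_finrank_ker ω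
  omega

theorem disjoint_range_span_of_nondegenerate_on_ker (hωalt : ∀ v, ω v v = 0)
    (hnd : ∀ v ∈ ker α, (∀ w ∈ ker α, ω v w = 0) → v = 0) :
    Disjoint (range ω) (K ∙ α) := by
  rw [Submodule.disjoint_def]
  rintro _ ⟨v, rfl⟩ hv
  obtain ⟨c, hc⟩ := Submodule.mem_span_singleton.mp hv
  have hωv : ∀ w, ω v w = c * α w := fun w ↦ by simp [← hc]
  rcases eq_or_ne c 0 with rfl | hc₀
  · simp [← hc]
  have hαv : α v = 0 := by simpa [hc₀, hωalt] using hωv v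
  have hv₀ : v = 0 := hnd v hαv fun w hw ↦ by rw [hωv, mem_ker.mp hw, mul_zero]
  simp [hv₀]

end

/-- The dual space decomposes as an internal direct sum `V* = im ω♭ ⊕ ℝ·α`. -/
theorem dual_decomposition
    (V : Type*) [AddCommGroup V] [Module ℝ V] [FiniteDimensional ℝ V]
    (α : V →ₗ[ℝ] ℝ) (hα : α ≠ 0)
    (ω : V →ₗ[ℝ] V →ₗ[ℝ] ℝ) (hωalt : ∀ v : V, ω v v = 0)
    (hnd : ∀ v ∈ LinearMap.ker α, (∀ w ∈ LinearMap.ker α, ω v w = 0) → v = 0) :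
    IsCompl (LinearMap.range ω) (Submodule.span ℝ {α}) := by
  refine (Submodule.isCompl_iff_disjoint _ _ ?_).mpr
    (disjoint_range_span_of_nondegenerate_on_ker α ω hωalt hnd)
  rw [Subspace.dual_finrank_eq, finrank_span_singleton hα]
  exact finrank_le_finrank_range_add_one_of_nondegenerate_on_ker α ω hnd
end

section
/- The alternating bilinear form Ω on ℝ × V defined by Ω((s, v), (s', v')) := s·α(v') − s'·α(v) + ω(v, v') is nondegenerate. (This is the pointwise linear-algebra content of the symplectization of Section 4: the 2-form d(e^t α) = e^t(dt∧α + dα) on M × ℝ is a symplectic form.) -/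
namespace LinearMap

variable {K V : Type*} [Field K] [AddCommGroup V] [Module K V]

/-- The value at `t = 0` of `d(eᵗ α) = eᵗ (dt ∧ α + dα)` on `ℝ × M`, with `ω` in place of `dα`. -/
def symplectizationForm (α : V →ₗ[K] K) (ω : V →ₗ[K] V →ₗ[K] K) :
    K × V →ₗ[K] K × V →ₗ[K] K :=
  mk₂ K (fun p q => p.1 * α q.2 - q.1 * α p.2 + ω p.2 q.2)
    (fun p p' q => by simp only [Prod.fst_add, Prod.snd_add, map_add, add_apply]; ring)
    (fun c p q => by
      simp only [Prod.smul_fst, Prod.smul_snd, map_smul, smul_apply, smul_eq_mul]; ring)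
    (fun p q q' => by simp only [Prod.fst_add, Prod.snd_add, map_add]; ring)
    (fun c p q => by simp only [Prod.smul_fst, Prod.smul_snd, map_smul, smul_eq_mul]; ring)

@[simp]
theorem symplectizationForm_apply (α : V →ₗ[K] K) (ω : V →ₗ[K] V →ₗ[K] K) (p q : K × V) :
    symplectizationForm α ω p q = p.1 * α q.2 - q.1 * α p.2 + ω p.2 q.2 :=
  rfl

/-- Pairing with `(1, 0)` puts `v` in `ker α`, pairing with `ker α` then kills `v`, and finally
pairing with any `(0, w)` with `α w ≠ 0` kills `s`. -/
theorem separatingLeft_symplectizationForm {α : V →ₗ[K] K} (hα : α ≠ 0)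
    {ω : V →ₗ[K] V →ₗ[K] K} (hnd : ∀ v ∈ ker α, (∀ w ∈ ker α, ω v w = 0) → v = 0) :
    (symplectizationForm α ω).SeparatingLeft := by
  rintro ⟨s, v⟩ h
  simp only [symplectizationForm_apply, Prod.forall] at h
  have hv_ker : v ∈ ker α := by simpa using h 1 0
  have hv : v = 0 := hnd v hv_ker fun w hw => by
    simpa [mem_ker.mp hw, mem_ker.mp hv_ker] using h 0 w
  subst hv
  obtain ⟨w, hw⟩ := DFunLike.ne_iff.mp hα
  have hs : s * α w = 0 := by simpa using h 0 w
  exact Prod.ext ((mul_eq_zero.mp hs).resolve_right hw) rfl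

end LinearMap

theorem symplectization_nondegenerate_general
    (V : Type*) [AddCommGroup V] [Module ℝ V]
    (α : V →ₗ[ℝ] ℝ) (hα : α ≠ 0)
    (ω : V →ₗ[ℝ] V →ₗ[ℝ] ℝ)
    (hnd : ∀ v ∈ LinearMap.ker α, (∀ w ∈ LinearMap.ker α, ω v w = 0) → v = 0) :
    ∀ p : ℝ × V, (∀ q : ℝ × V, p.1 * α q.2 - q.1 * α p.2 + ω p.2 q.2 = 0) → p = 0 :=
  LinearMap.separatingLeft_symplectizationForm hα hnd

/-- Pointwise symplectization: the form
`Ω((s,v),(s',v')) = s·α(v') - s'·α(v) + ω(v,v')` on `ℝ × V` is nondegenerate. -/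
theorem symplectization_nondegenerate
    (V : Type*) [AddCommGroup V] [Module ℝ V] [FiniteDimensional ℝ V]
    (α : V →ₗ[ℝ] ℝ) (hα : α ≠ 0)
    (ω : V →ₗ[ℝ] V →ₗ[ℝ] ℝ) (hωalt : ∀ v : V, ω v v = 0)
    (hnd : ∀ v ∈ LinearMap.ker α, (∀ w ∈ LinearMap.ker α, ω v w = 0) → v = 0) :
    ∀ p : ℝ × V, (∀ q : ℝ × V, p.1 * α q.2 - q.1 * α p.2 + ω p.2 q.2 = 0) → p = 0 :=
  symplectization_nondegenerate_general V α hα ω hnd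
end

section
/- Suppose Λ and R satisfy the Jacobi structure equations (i) Λ(Λ(f,g),h) + Λ(Λ(g,h),f) + Λ(Λ(h,f),g) = R(f)·Λ(g,h) + R(g)·Λ(h,f) + R(h)·Λ(f,g) for all f, g, h ∈ A, and (ii) R(Λ(f,g)) = Λ(R(f),g) + Λ(f,R(g)) for all f, g ∈ A. Then the Jacobi bracket {f,g} = Λ(f,g) + f·R(g) − g·R(f) satisfies the Jacobi identity {f,{g,h}} + {g,{h,f}} + {h,{f,g}} = 0 for all f, g, h, so that (A, {·,·}) is a real Lie algebra. (This is the bracket-level content of the direction of Proposition 3.3 and Theorem 3.4 associating a Lie bracket on functions to a Jacobi structure (Λ, R) with [Λ,Λ] = 2RΛ and [R,Λ] = 0.) -/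
/-!
Condition (ii) says precisely that `R` is a derivation of the Jacobi bracket:
`R {g,h} = {R g, h} + {g, R h}`. Using it together with the Leibniz rule for `Λ`, the cyclic sum
of `{f,{g,h}}` becomes a polynomial expression in the values of `Λ` and `R`. By antisymmetry and
(i), the terms `Λ(f, Λ(g,h))` contribute `-Σ R(f) Λ(g,h)`, and so do the terms `-{g,h} R(f)`,
while the Leibniz rule produces `+2 Σ R(f) Λ(g,h)`. Everything else cancels in cyclic pairs,
by antisymmetry of `Λ` and commutativity of `A`.
-/

section JacobiBracket

variable {A : Type*} [CommRing A] [Algebra ℝ A] (Λ : A →ₗ[ℝ] A →ₗ[ℝ] A) (R : A →ₗ[ℝ] A)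

def jacobiBracket (f g : A) : A := Λ f g + f * R g - g * R f

theorem jacobiBracket_self (hΛ : Λ.IsAlt) (f : A) : jacobiBracket Λ R f f = 0 := by
  simp [jacobiBracket, hΛ.self_eq_zero]

variable {Λ R}

theorem map_jacobiBracket (hR : ∀ f g : A, R (f * g) = f * R g + g * R f)
    (hRΛ : ∀ f g : A, R (Λ f g) = Λ (R f) g + Λ f (R g)) (f g : A) :
    R (jacobiBracket Λ R f g) = jacobiBracket Λ R (R f) g + jacobiBracket Λ R f (R g) := by
  simp only [jacobiBracket, map_add, map_sub, hR, hRΛ]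
  ring

theorem apply_jacobiBracket (hΛd : ∀ f g h : A, Λ f (g * h) = g * Λ f h + h * Λ f g)
    (f g h : A) :
    Λ f (jacobiBracket Λ R g h) =
      Λ f (Λ g h) + g * Λ f (R h) + R h * Λ f g - h * Λ f (R g) - R g * Λ f h := by
  simp only [jacobiBracket, map_add, map_sub, hΛd]
  ring

theorem jacobiBracket_jacobiBracket
    (hΛd : ∀ f g h : A, Λ f (g * h) = g * Λ f h + h * Λ f g)
    (hR : ∀ f g : A, R (f * g) = f * R g + g * R f)
    (hRΛ : ∀ f g : A, R (Λ f g) = Λ (R f) g + Λ f (R g)) (f g h : A) :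
    jacobiBracket Λ R f (jacobiBracket Λ R g h) =
      Λ f (Λ g h) + g * Λ f (R h) + R h * Λ f g - h * Λ f (R g) - R g * Λ f h
        + f * (jacobiBracket Λ R (R g) h + jacobiBracket Λ R g (R h))
        - jacobiBracket Λ R g h * R f := by
  rw [← apply_jacobiBracket hΛd, ← map_jacobiBracket hR hRΛ]
  rfl

theorem jacobiBracket_jacobi (hΛ : Λ.IsAlt)
    (hΛd : ∀ f g h : A, Λ f (g * h) = g * Λ f h + h * Λ f g)
    (hR : ∀ f g : A, R (f * g) = f * R g + g * R f)
    (hΛΛ : ∀ f g h : A,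
      Λ (Λ f g) h + Λ (Λ g h) f + Λ (Λ h f) g = R f * Λ g h + R g * Λ h f + R h * Λ f g)
    (hRΛ : ∀ f g : A, R (Λ f g) = Λ (R f) g + Λ f (R g)) (f g h : A) :
    jacobiBracket Λ R f (jacobiBracket Λ R g h) + jacobiBracket Λ R g (jacobiBracket Λ R h f) +
      jacobiBracket Λ R h (jacobiBracket Λ R f g) = 0 := by
  have antisymm := hΛ.neg
  simp only [jacobiBracket_jacobiBracket hΛd hR hRΛ]
  simp only [jacobiBracket]
  linear_combination (-1 : A) * hΛΛ f g h - antisymm f (Λ g h) - antisymm g (Λ h f)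
      - antisymm h (Λ f g) + R f * antisymm g h + R g * antisymm h f + R h * antisymm f g
      - f * antisymm (R g) h - g * antisymm (R h) f - h * antisymm (R f) g

end JacobiBracket

/-- If `(Λ, R)` satisfies the Jacobi structure equations, then the Jacobi
bracket `{f,g} = Λ(f,g) + f·R(g) − g·R(f)` satisfies the Jacobi identity,
so `(A, {·,·})` is a real Lie algebra. -/
theorem jacobi_structure_gives_lie_bracket
    (A : Type*) [CommRing A] [Algebra ℝ A]
    (Λ : A →ₗ[ℝ] A →ₗ[ℝ] A) (hΛ0 : ∀ f : A, Λ f f = 0)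
    (hΛd : ∀ f g h : A, Λ f (g * h) = g * Λ f h + h * Λ f g)
    (R : A →ₗ[ℝ] A) (hR : ∀ f g : A, R (f * g) = f * R g + g * R f)
    (h1 : ∀ f g h : A,
      Λ (Λ f g) h + Λ (Λ g h) f + Λ (Λ h f) g =
        R f * Λ g h + R g * Λ h f + R h * Λ f g)
    (h2 : ∀ f g : A, R (Λ f g) = Λ (R f) g + Λ f (R g))
    (J : A → A → A) (hJ : ∀ f g : A, J f g = Λ f g + f * R g - g * R f) :
    (∀ f : A, J f f = 0) ∧
    ∀ f g h : A, J f (J g h) + J g (J h f) + J h (J f g) = 0 := by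
  obtain rfl : J = jacobiBracket Λ R := funext fun f => funext (hJ f)
  exact ⟨jacobiBracket_self Λ R hΛ0, jacobiBracket_jacobi hΛ0 hΛd hR h1 h2⟩
end

section
/- The Poissonization bracket {·,·}_P on the Laurent polynomial ring A[u,u⁻¹] is alternating and is a derivation in each argument; moreover, {·,·}_P satisfies the Jacobi identity (i.e. is a Poisson bracket) if and only if the Jacobi structure equations hold: (i) Λ(Λ(f,g),h) + Λ(Λ(g,h),f) + Λ(Λ(h,f),g) = R(f)·Λ(g,h) + R(g)·Λ(h,f) + R(h)·Λ(f,g) for all f, g, h ∈ A, and (ii) R(Λ(f,g)) = Λ(R(f),g) + Λ(f,R(g)) for all f, g ∈ A. (This is the algebraic form of the equivalence, via Proposition 3.3 and the commuting diagram of Theorem 4.5, between (Λ, R) being a Jacobi structure and its Poissonization e^{−t}(Λ + ∂/∂t ∧ R) being a Poisson structure on M × ℝ.) -/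
/-!
Everything is biadditive, so every identity can be checked on monomials `f uˡ`, where the
bracket is explicit. On monomials the Jacobiator is
`(l f (L_R Λ)(g,h) + m g (L_R Λ)(h,f) + n h (L_R Λ)(f,g) - J(f,g,h)) u^(l+m+n-2)`,
with `J` the defect of the first Jacobi structure equation and `L_R Λ` the Lie derivative of `Λ`
along `R` (the defect of the second). Monomials of degree `0` isolate `J`, after which
`l = 1, f = 1` isolates `L_R Λ`.
-/

open LaurentPolynomial

namespace LaurentPolynomial

theorem C_mul_T_eq_zero_iff {A : Type*} [Semiring A] {a : A} {n : ℤ} :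
    C a * T n = 0 ↔ a = 0 := by
  rw [← single_eq_C_mul_T, AddMonoidAlgebra.single_eq_zero]

theorem C_mul_T_mul_C_mul_T {A : Type*} [CommSemiring A] (a b : A) (m n : ℤ) :
    C a * T m * (C b * T n) = C (a * b) * T (m + n) := by
  rw [T_add, map_mul]
  ring

end LaurentPolynomial

section Poissonization

variable {K A : Type*} [CommSemiring K] [CommRing A] [Module K A]

def jacobiDefect (Λ : A →ₗ[K] A →ₗ[K] A) (R : A →ₗ[K] A) (f g h : A) : A :=
  Λ (Λ f g) h + Λ (Λ g h) f + Λ (Λ h f) g - (R f * Λ g h + R g * Λ h f + R h * Λ f g)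

def lieDerivBivector (Λ : A →ₗ[K] A →ₗ[K] A) (R : A →ₗ[K] A) (f g : A) : A :=
  R (Λ f g) - (Λ (R f) g + Λ f (R g))

def jacobiator {B : Type*} [Add B] (P : B → B → B) (p q r : B) : B :=
  P p (P q r) + P q (P r p) + P r (P p q)

theorem jacobiator_rotate {B : Type*} [AddCommSemigroup B] (P : B → B → B) (p q r : B) :
    jacobiator P p q r = jacobiator P q r p :=
  add_rotate _ _ _

structure IsPoissonization (Λ : A →ₗ[K] A →ₗ[K] A) (R : A →ₗ[K] A)
    (P : A[T;T⁻¹] → A[T;T⁻¹] → A[T;T⁻¹]) : Prop where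
  add_left : ∀ p q r, P (p + q) r = P p r + P q r
  add_right : ∀ p q r, P p (q + r) = P p q + P p r
  C_mul_T : ∀ (f g : A) (m k : ℤ),
    P (C f * T m) (C g * T k) = C (Λ f g + m • (f * R g) - k • (R f * g)) * T (m + k - 1)

namespace IsPoissonization

variable {Λ : A →ₗ[K] A →ₗ[K] A} {R : A →ₗ[K] A} {P : A[T;T⁻¹] → A[T;T⁻¹] → A[T;T⁻¹]}

theorem swap (hP : IsPoissonization Λ R P) (hΛ : Λ.IsAlt) (p q : A[T;T⁻¹]) :
    P q p = -P p q := by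
  induction p using LaurentPolynomial.induction_on' with
  | add p₁ p₂ h₁ h₂ => rw [hP.add_right, hP.add_left, h₁, h₂, neg_add]
  | C_mul_T m f =>
    induction q using LaurentPolynomial.induction_on' with
    | add q₁ q₂ h₁ h₂ => rw [hP.add_left, hP.add_right, h₁, h₂, neg_add]
    | C_mul_T k g =>
      rw [hP.C_mul_T, hP.C_mul_T, ← neg_mul, ← map_neg, ← hΛ.neg, add_comm k]
      congr 2
      ring

theorem apply_self (hP : IsPoissonization Λ R P) (hΛ : Λ.IsAlt) (p : A[T;T⁻¹]) :
    P p p = 0 := by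
  induction p using LaurentPolynomial.induction_on' with
  | add p₁ p₂ h₁ h₂ =>
    rw [hP.add_left, hP.add_right, hP.add_right, h₁, h₂, hP.swap hΛ p₁ p₂]
    abel
  | C_mul_T m f => rw [hP.C_mul_T, hΛ.self_eq_zero, mul_comm (R f), zero_add, sub_self, map_zero,
      zero_mul]

theorem apply_mul_right (hP : IsPoissonization Λ R P)
    (hΛd : ∀ f g h : A, Λ f (g * h) = g * Λ f h + h * Λ f g)
    (hR : ∀ f g : A, R (f * g) = f * R g + g * R f) (p q r : A[T;T⁻¹]) :
    P p (q * r) = q * P p r + r * P p q := by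
  induction p using LaurentPolynomial.induction_on' with
  | add p₁ p₂ h₁ h₂ => rw [hP.add_left, h₁, h₂, hP.add_left, hP.add_left]; ring
  | C_mul_T m f =>
    induction q using LaurentPolynomial.induction_on' with
    | add q₁ q₂ h₁ h₂ => rw [add_mul, hP.add_right, h₁, h₂, hP.add_right]; ring
    | C_mul_T n g =>
      induction r using LaurentPolynomial.induction_on' with
      | add r₁ r₂ h₁ h₂ => rw [mul_add, hP.add_right, h₁, h₂, hP.add_right]; ring
      | C_mul_T k h =>
        simp only [C_mul_T_mul_C_mul_T, hP.C_mul_T, hΛd, hR]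
        rw [show n + (m + k - 1) = m + (n + k) - 1 by ring,
          show k + (m + n - 1) = m + (n + k) - 1 by ring, ← add_mul, ← map_add]
        congr 2
        simp only [zsmul_eq_mul]
        push_cast
        ring

theorem jacobiator_C_mul_T (hP : IsPoissonization Λ R P) (hΛ : Λ.IsAlt)
    (hΛd : ∀ f g h : A, Λ f (g * h) = g * Λ f h + h * Λ f g)
    (hR : ∀ f g : A, R (f * g) = f * R g + g * R f) (f g h : A) (l m n : ℤ) :
    jacobiator P (C f * T l) (C g * T m) (C h * T n) =
      C (l • (f * lieDerivBivector Λ R g h) + m • (g * lieDerivBivector Λ R h f) +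
          n • (h * lieDerivBivector Λ R f g) - jacobiDefect Λ R f g h) * T (l + m + n - 2) := by
  simp only [jacobiator, hP.C_mul_T]
  rw [show l + (m + n - 1) - 1 = l + m + n - 2 by ring,
    show m + (n + l - 1) - 1 = l + m + n - 2 by ring,
    show n + (l + m - 1) - 1 = l + m + n - 2 by ring, ← add_mul, ← add_mul, ← map_add, ← map_add]
  congr 2
  simp only [lieDerivBivector, jacobiDefect, map_add, map_sub, map_zsmul, hΛd, hR,
    ← hΛ.neg (Λ g h) f, ← hΛ.neg (Λ h f) g, ← hΛ.neg (Λ f g) h, ← hΛ.neg f g, ← hΛ.neg g h,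
    ← hΛ.neg h f, ← hΛ.neg h (R g), ← hΛ.neg f (R h), ← hΛ.neg g (R f)]
  simp only [zsmul_eq_mul]
  push_cast
  ring

theorem jacobiator_add_left (hP : IsPoissonization Λ R P) (p₁ p₂ q r : A[T;T⁻¹]) :
    jacobiator P (p₁ + p₂) q r = jacobiator P p₁ q r + jacobiator P p₂ q r := by
  simp only [jacobiator, hP.add_left, hP.add_right]
  abel

theorem forall_jacobiator_eq_zero_iff (hP : IsPoissonization Λ R P) :
    (∀ p q r, jacobiator P p q r = 0) ↔
      ∀ (f g h : A) (l m n : ℤ), jacobiator P (C f * T l) (C g * T m) (C h * T n) = 0 := by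
  refine ⟨fun H f g h l m n => H _ _ _, fun H p q r => ?_⟩
  induction p using LaurentPolynomial.induction_on' with
  | add p₁ p₂ h₁ h₂ => rw [hP.jacobiator_add_left, h₁, h₂, add_zero]
  | C_mul_T l f =>
    rw [jacobiator_rotate]
    induction q using LaurentPolynomial.induction_on' with
    | add q₁ q₂ h₁ h₂ => rw [hP.jacobiator_add_left, h₁, h₂, add_zero]
    | C_mul_T m g =>
      rw [jacobiator_rotate]
      induction r using LaurentPolynomial.induction_on' with
      | add r₁ r₂ h₁ h₂ => rw [hP.jacobiator_add_left, h₁, h₂, add_zero]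
      | C_mul_T n h => rw [jacobiator_rotate]; exact H f g h l m n

theorem forall_jacobiator_eq_zero_iff_jacobi (hP : IsPoissonization Λ R P) (hΛ : Λ.IsAlt)
    (hΛd : ∀ f g h : A, Λ f (g * h) = g * Λ f h + h * Λ f g)
    (hR : ∀ f g : A, R (f * g) = f * R g + g * R f) :
    (∀ p q r, jacobiator P p q r = 0) ↔
      (∀ f g h, jacobiDefect Λ R f g h = 0) ∧ ∀ f g, lieDerivBivector Λ R f g = 0 := by
  simp only [hP.forall_jacobiator_eq_zero_iff, hP.jacobiator_C_mul_T hΛ hΛd hR,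
    C_mul_T_eq_zero_iff]
  constructor
  · intro H
    have hJ (f g h : A) : jacobiDefect Λ R f g h = 0 := by simpa using H f g h 0 0 0
    refine ⟨hJ, fun f g => ?_⟩
    simpa [hJ] using H 1 f g 1 0 0
  · rintro ⟨hJ, hL⟩ f g h l m n
    simp [hJ, hL]

end IsPoissonization

end Poissonization

theorem poissonization_bracket_poisson_iff_jacobi_general
    (A : Type*) [CommRing A] [Algebra ℝ A]
    (Λ : A →ₗ[ℝ] A →ₗ[ℝ] A) (hΛ0 : ∀ f : A, Λ f f = 0)
    (hΛd : ∀ f g h : A, Λ f (g * h) = g * Λ f h + h * Λ f g)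
    (R : A →ₗ[ℝ] A) (hR : ∀ f g : A, R (f * g) = f * R g + g * R f)
    (P : LaurentPolynomial A → LaurentPolynomial A → LaurentPolynomial A)
    (hPadd1 : ∀ p q r, P (p + q) r = P p r + P q r)
    (hPadd2 : ∀ p q r, P p (q + r) = P p q + P p r)
    (hPmono : ∀ (f g : A) (m k : ℤ),
      P (LaurentPolynomial.C f * LaurentPolynomial.T m)
        (LaurentPolynomial.C g * LaurentPolynomial.T k) =
      LaurentPolynomial.C (Λ f g + m • (f * R g) - k • (R f * g)) *
        LaurentPolynomial.T (m + k - 1)) :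
    (∀ p, P p p = 0) ∧
    (∀ p q r, P p (q * r) = q * P p r + r * P p q) ∧
    ((∀ p q r, P p (P q r) + P q (P r p) + P r (P p q) = 0) ↔
      ((∀ f g h : A,
          Λ (Λ f g) h + Λ (Λ g h) f + Λ (Λ h f) g =
            R f * Λ g h + R g * Λ h f + R h * Λ f g) ∧
       (∀ f g : A, R (Λ f g) = Λ (R f) g + Λ f (R g)))) := by
  have hP : IsPoissonization Λ R P := ⟨hPadd1, hPadd2, hPmono⟩
  refine ⟨hP.apply_self hΛ0, hP.apply_mul_right hΛd hR, ?_⟩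
  simpa only [jacobiator, jacobiDefect, lieDerivBivector, sub_eq_zero] using
    hP.forall_jacobiator_eq_zero_iff_jacobi hΛ0 hΛd hR

/-- The Poissonization bracket `{·,·}_P` on the Laurent polynomial ring
`A[u,u⁻¹]` (determined by ℝ-bilinearity and
`{f·uᵐ, g·uᵏ}_P = (Λ(f,g) + m·f·R(g) − k·R(f)·g)·u^{m+k−1}`)
is alternating and a derivation in each argument, and it satisfies the
Jacobi identity iff the Jacobi structure equations hold for `(Λ, R)`. -/
theorem poissonization_bracket_poisson_iff_jacobi
    (A : Type*) [CommRing A] [Algebra ℝ A]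
    (Λ : A →ₗ[ℝ] A →ₗ[ℝ] A) (hΛ0 : ∀ f : A, Λ f f = 0)
    (hΛd : ∀ f g h : A, Λ f (g * h) = g * Λ f h + h * Λ f g)
    (R : A →ₗ[ℝ] A) (hR : ∀ f g : A, R (f * g) = f * R g + g * R f)
    (P : LaurentPolynomial A → LaurentPolynomial A → LaurentPolynomial A)
    (hPadd1 : ∀ p q r, P (p + q) r = P p r + P q r)
    (hPadd2 : ∀ p q r, P p (q + r) = P p q + P p r)
    (hPsmul1 : ∀ (c : ℝ) p q, P (c • p) q = c • P p q)
    (hPsmul2 : ∀ (c : ℝ) p q, P p (c • q) = c • P p q)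
    (hPmono : ∀ (f g : A) (m k : ℤ),
      P (LaurentPolynomial.C f * LaurentPolynomial.T m)
        (LaurentPolynomial.C g * LaurentPolynomial.T k) =
      LaurentPolynomial.C (Λ f g + m • (f * R g) - k • (R f * g)) *
        LaurentPolynomial.T (m + k - 1)) :
    (∀ p, P p p = 0) ∧
    (∀ p q r, P p (q * r) = q * P p r + r * P p q) ∧
    ((∀ p q r, P p (P q r) + P q (P r p) + P r (P p q) = 0) ↔
      ((∀ f g h : A,
          Λ (Λ f g) h + Λ (Λ g h) f + Λ (Λ h f) g =
            R f * Λ g h + R g * Λ h f + R h * Λ f g) ∧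
       (∀ f g : A, R (Λ f g) = Λ (R f) g + Λ f (R g)))) :=
  poissonization_bracket_poisson_iff_jacobi_general A Λ hΛ0 hΛd R hR P hPadd1 hPadd2 hPmono
end

section
/- Let {·,·} be an ℝ-bilinear alternating bracket on A. Then {·,·} satisfies the first-order Leibniz identity {f, gh} = g·{f,h} + h·{f,g} − gh·{f,1} for all f, g, h ∈ A if and only if there exist an alternating biderivation Λ on A and a derivation R of A such that {f,g} = Λ(f,g) + f·R(g) − g·R(f) for all f, g. In that case Λ and R are uniquely determined, namely R(f) = −{f,1} and Λ(f,g) = {f,g} − f·R(g) + g·R(f). (This is the algebraic content of the equivalence, used throughout the paper, between Lichnerowicz's formulation of Jacobi-type brackets via a pair (Λ, R) and Kirillov's formulation via brackets on functions given by first-order operators.) -/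
/-!
Put `R f := -{f, 1}`. Alternation turns the first-order identity at `f = 1` into the Leibniz rule
for `R`, and `Λ := {·,·} - (f R g - g R f)` is again first-order with `Λ(f, 1) = 0`, hence a
biderivation. Conversely the first-order identity is linear in the bracket and holds both for
biderivations and for `f R g - g R f` with `R` a derivation; evaluating at `g = 1` recovers `R`.
-/

section FirstOrderBracket

variable {K A : Type*} [CommSemiring K] [CommRing A] [Algebra K A]

def IsLeibniz (D : A → A) : Prop :=
  ∀ g h : A, D (g * h) = g * D h + h * D g

theorem IsLeibniz.map_one {D : A → A} (hD : IsLeibniz D) : D 1 = 0 := by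
  have h := hD 1 1
  rw [mul_one, one_mul] at h
  linear_combination -h

def IsFirstOrder (b : A →ₗ[K] A →ₗ[K] A) : Prop :=
  ∀ f g h : A, b f (g * h) = g * b f h + h * b f g - (g * h) * b f 1

theorem IsFirstOrder.add {b c : A →ₗ[K] A →ₗ[K] A} (hb : IsFirstOrder b)
    (hc : IsFirstOrder c) : IsFirstOrder (b + c) := by
  intro f g h
  simp only [LinearMap.add_apply, hb f g h, hc f g h]
  ring

theorem IsFirstOrder.sub {b c : A →ₗ[K] A →ₗ[K] A} (hb : IsFirstOrder b)
    (hc : IsFirstOrder c) : IsFirstOrder (b - c) := by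
  intro f g h
  simp only [LinearMap.sub_apply, hb f g h, hc f g h]
  ring

theorem isFirstOrder_of_isLeibniz {Λ : A →ₗ[K] A →ₗ[K] A} (hΛ : ∀ f, IsLeibniz (Λ f)) :
    IsFirstOrder Λ := by
  intro f g h
  rw [hΛ f g h, (hΛ f).map_one, mul_zero, sub_zero]

theorem IsFirstOrder.isLeibniz_of_apply_one {b : A →ₗ[K] A →ₗ[K] A} (hb : IsFirstOrder b)
    (h1 : ∀ f, b f 1 = 0) (f : A) : IsLeibniz (b f) := by
  intro g h
  rw [hb f g h, h1 f, mul_zero, sub_zero]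

theorem IsFirstOrder.isLeibniz_neg_flip_one {b : A →ₗ[K] A →ₗ[K] A}
    (hb0 : ∀ f, b f f = 0) (hb : IsFirstOrder b) : IsLeibniz (-b.flip 1) := by
  have hskew : ∀ f g, b f g = -b g f := fun f g =>
    (LinearMap.IsAlt.neg (B := b) hb0 g f).symm
  intro g h
  simp only [LinearMap.neg_apply, LinearMap.flip_apply]
  rw [hskew (g * h), hskew h, hskew g, hb 1 g h, hb0]
  ring

def derivationBracket (R : A →ₗ[K] A) : A →ₗ[K] A →ₗ[K] A :=
  (LinearMap.mul K A).compl₂ R - ((LinearMap.mul K A).compl₂ R).flip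

@[simp]
theorem derivationBracket_apply (R : A →ₗ[K] A) (f g : A) :
    derivationBracket R f g = f * R g - g * R f :=
  rfl

theorem derivationBracket_self (R : A →ₗ[K] A) (f : A) : derivationBracket R f f = 0 := by
  rw [derivationBracket_apply, sub_self]

theorem isFirstOrder_derivationBracket {R : A →ₗ[K] A} (hR : IsLeibniz R) :
    IsFirstOrder (derivationBracket R) := by
  intro f g h
  simp only [derivationBracket_apply, hR g h, hR.map_one]
  ring

end FirstOrderBracket

/-- An ℝ-bilinear alternating bracket on `A` satisfies the first-order
Leibniz identity `{f, gh} = g·{f,h} + h·{f,g} − gh·{f,1}` iff it is of the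
form `{f,g} = Λ(f,g) + f·R(g) − g·R(f)` for an alternating biderivation `Λ`
and a derivation `R`; in that case `Λ` and `R` are uniquely determined, with
`R(f) = −{f,1}` and `Λ(f,g) = {f,g} − f·R(g) + g·R(f)`. -/
theorem first_order_bracket_iff_jacobi_pair
    (A : Type*) [CommRing A] [Algebra ℝ A]
    (b : A →ₗ[ℝ] A →ₗ[ℝ] A) (hb0 : ∀ f : A, b f f = 0) :
    ((∀ f g h : A, b f (g * h) = g * b f h + h * b f g - (g * h) * b f 1) ↔
      ∃ (Λ : A →ₗ[ℝ] A →ₗ[ℝ] A) (R : A →ₗ[ℝ] A),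
        (∀ f : A, Λ f f = 0) ∧
        (∀ f g h : A, Λ f (g * h) = g * Λ f h + h * Λ f g) ∧
        (∀ f g : A, R (f * g) = f * R g + g * R f) ∧
        (∀ f g : A, b f g = Λ f g + f * R g - g * R f)) ∧
    (∀ (Λ : A →ₗ[ℝ] A →ₗ[ℝ] A) (R : A →ₗ[ℝ] A),
      (∀ f : A, Λ f f = 0) →
      (∀ f g h : A, Λ f (g * h) = g * Λ f h + h * Λ f g) →
      (∀ f g : A, R (f * g) = f * R g + g * R f) →
      (∀ f g : A, b f g = Λ f g + f * R g - g * R f) →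
      (∀ f : A, R f = -(b f 1)) ∧
      (∀ f g : A, Λ f g = b f g - f * R g + g * R f)) := by
  refine ⟨⟨fun (hb : IsFirstOrder b) => ?_, ?_⟩, ?_⟩
  · have hR := IsFirstOrder.isLeibniz_neg_flip_one hb0 hb
    refine ⟨b - derivationBracket (-b.flip 1), -b.flip 1, fun f => ?_, ?_, hR, fun f g => ?_⟩
    · rw [LinearMap.sub_apply, LinearMap.sub_apply, hb0, derivationBracket_self, sub_self]
    · refine (hb.sub (isFirstOrder_derivationBracket hR)).isLeibniz_of_apply_one fun f => ?_
      simp [hR.map_one]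
    · simp only [LinearMap.sub_apply, derivationBracket_apply]
      ring
  · rintro ⟨Λ, R, -, hΛ, hR, hbr⟩
    have hsum : b = Λ + derivationBracket R := by
      ext f g
      simp only [hbr, LinearMap.add_apply, derivationBracket_apply]
      ring
    exact hsum ▸ (isFirstOrder_of_isLeibniz hΛ).add (isFirstOrder_derivationBracket hR)
  · intro Λ R _ (hΛ : ∀ f, IsLeibniz (Λ f)) (hR : IsLeibniz R) hbr
    refine ⟨fun f => ?_, fun f g => ?_⟩
    · rw [hbr, (hΛ f).map_one, hR.map_one]
      ring
    · rw [hbr]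
      ring
end
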